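/- Let P : ℤ → SL(2,ℝ) satisfy sup_{i∈ℤ} ‖P(i)‖ < ∞. Then P is uniformly hyperbolic if and only if P admits a dominated splitting. -/

import Mathlib

open Matrix

noncomputable section

/-- Euclidean plane. -/
abbrev E2 := EuclideanSpace ℝ (Fin 2)

/-- The real projective line, as the projectivization of `ℝ²`. -/
abbrev RP1 := Projectivization ℝ E2

/-- The linear map on `E2` induced by a `2×2` matrix. -/
def matLin (A : Matrix (Fin 2) (Fin 2) ℝ) : E2 →ₗ[ℝ] E2 :=
  (WithLp.linearEquiv 2 ℝ (Fin 2 → ℝ)).symm.toLinearMap ∘ₗ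
    A.mulVecLin ∘ₗ (WithLp.linearEquiv 2 ℝ (Fin 2 → ℝ)).toLinearMap

/-- Matrix-vector multiplication on `E2`. -/
def mulVecE (A : Matrix (Fin 2) (Fin 2) ℝ) (v : E2) : E2 := matLin A v

/-- The action of an (invertible) matrix on the projective line `RP1`
(junk value if the matrix is not injective). -/
def matAct (A : Matrix (Fin 2) (Fin 2) ℝ) (x : RP1) : RP1 :=
  open scoped Classical in
  if h : Function.Injective (matLin A) then Projectivization.map (matLin A) h x else x

/-- The (Euclidean) operator norm of a `2×2` matrix. -/
def matOpNorm (A : Matrix (Fin 2) (Fin 2) ℝ) : ℝ :=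
  ‖LinearMap.toContinuousLinearMap (matLin A)‖

/-- The metric `d([u],[w]) = √(1 − (⟨u,w⟩/(‖u‖‖w‖))²)` on `RP1`. -/
def projDist (x y : RP1) : ℝ :=
  Real.sqrt (1 - ((inner ℝ x.rep y.rep : ℝ) / (‖x.rep‖ * ‖y.rep‖)) ^ 2)

/-- Forward cocycle iterates: `fwd A n i = A(i+n−1)⋯A(i)`. -/
def fwd (A : ℤ → Matrix (Fin 2) (Fin 2) ℝ) : ℕ → ℤ → Matrix (Fin 2) (Fin 2) ℝ
  | 0, _ => 1
  | n + 1, i => A (i + n) * fwd A n i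

/-- Backward cocycle iterates: `bwd A n i = A(i−n)⁻¹⋯A(i−1)⁻¹`. -/
def bwd (A : ℤ → Matrix (Fin 2) (Fin 2) ℝ) : ℕ → ℤ → Matrix (Fin 2) (Fin 2) ℝ
  | 0, _ => 1
  | n + 1, i => bwd A n (i - 1) * (A (i - 1))⁻¹

/-- `w` is a nonzero vector spanning the line `x ∈ RP1`. -/
def SpansLine (w : E2) (x : RP1) : Prop := ∃ h : w ≠ 0, Projectivization.mk ℝ w h = x

/-- Uniform hyperbolicity witnessed by unstable/stable directions `u`, `s`. -/
def IsUHWith (P : ℤ → Matrix (Fin 2) (Fin 2) ℝ) (u s : ℤ → RP1) : Prop :=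
  (∀ i : ℤ, matAct (P i) (u i) = u (i + 1) ∧ matAct (P i) (s i) = s (i + 1)) ∧
  ∃ C > 0, ∃ η > 1, ∀ i : ℤ, ∀ n : ℕ,
    (∀ w : E2, ‖w‖ = 1 → SpansLine w (u i) → ‖mulVecE (bwd P n i) w‖ ≤ C / η ^ n) ∧
    (∀ w : E2, ‖w‖ = 1 → SpansLine w (s i) → ‖mulVecE (fwd P n i) w‖ ≤ C / η ^ n)

/-- Uniform hyperbolicity of a cocycle. -/
def IsUH (P : ℤ → Matrix (Fin 2) (Fin 2) ℝ) : Prop := ∃ u s, IsUHWith P u s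

/-- Dominated splitting (DS1)–(DS4). -/
def IsDS (T : ℤ → Matrix (Fin 2) (Fin 2) ℝ) : Prop :=
  ∃ u s : ℤ → RP1,
    (∀ i : ℤ, matAct (T i) (u i) = u (i + 1) ∧ matAct (T i) (s i) = s (i + 1)) ∧
    ∃ N : ℕ, 1 ≤ N ∧
      (∃ η > 1, ∀ i : ℤ, ∀ w w' : E2, ‖w‖ = 1 → ‖w'‖ = 1 →
        SpansLine w (u i) → SpansLine w' (s i) →
        ‖mulVecE (fwd T N i) w‖ > η * ‖mulVecE (fwd T N i) w'‖) ∧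
      (∃ δ > 0, ∀ i : ℤ, projDist (u i) (s i) > δ) ∧
      (∃ c > 0, ∀ i : ℤ, c ≤ matOpNorm (fwd T N i))

/-!
Uniform hyperbolicity inverts to `‖P_n(i) û‖ ≥ ηⁿ / C` along the unstable line, while the stable
line contracts like `C / ηⁿ`; so one long block `N` dominates, and the two lines stay apart because
a unit vector of `u` minus its projection onto `s` is still stretched by the gap between the two
rates.

Conversely, with determinant one the area is preserved: if `a`, `b` are the stretch factors of
`P_N(i)` along `s(i)`, `u(i)` and `d(i)` is the sine of the angle between `u(i)` and `s(i)`, then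
`a b d(i+N) = d(i)`. Domination `η a < b` turns this into `η a² d(i+N) ≤ d(i)` and
`η d(i) ≤ b² d(i+N)`, and iterating over blocks with `δ < d ≤ 1` gives contraction and expansion
at rate `√η` per block. The remaining `n mod N` steps cost at most a factor `M ^ N`.
-/

lemma matLin_mul (A B : Matrix (Fin 2) (Fin 2) ℝ) : matLin (A * B) = matLin A ∘ₗ matLin B := by
  ext v j; simp [matLin]

lemma mulVecE_mul (A B : Matrix (Fin 2) (Fin 2) ℝ) (v : E2) :
    mulVecE (A * B) v = mulVecE A (mulVecE B v) := by
  simp [mulVecE, matLin_mul]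

lemma mulVecE_one (v : E2) : mulVecE 1 v = v := by
  simp [mulVecE, matLin]

lemma mulVecE_smul (A : Matrix (Fin 2) (Fin 2) ℝ) (c : ℝ) (v : E2) :
    mulVecE A (c • v) = c • mulVecE A v := by
  simp [mulVecE]

lemma mulVecE_sub (A : Matrix (Fin 2) (Fin 2) ℝ) (v w : E2) :
    mulVecE A (v - w) = mulVecE A v - mulVecE A w := by
  simp [mulVecE]

lemma mulVecE_apply (A : Matrix (Fin 2) (Fin 2) ℝ) (v : E2) (j : Fin 2) :
    mulVecE A v j = A j 0 * v 0 + A j 1 * v 1 := by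
  change A.mulVec v j = _
  simp [Matrix.mulVec, dotProduct, Fin.sum_univ_two]

lemma mulVecE_inv_mulVecE {A : Matrix (Fin 2) (Fin 2) ℝ} (hA : IsUnit A.det) (v : E2) :
    mulVecE A⁻¹ (mulVecE A v) = v := by
  rw [← mulVecE_mul, Matrix.nonsing_inv_mul A hA, mulVecE_one]

lemma injective_matLin {A : Matrix (Fin 2) (Fin 2) ℝ} (hA : IsUnit A.det) :
    Function.Injective (matLin A) :=
  Function.LeftInverse.injective (g := matLin A⁻¹) (mulVecE_inv_mulVecE hA)

lemma mulVecE_ne_zero {A : Matrix (Fin 2) (Fin 2) ℝ} (hA : IsUnit A.det) {v : E2} (hv : v ≠ 0) :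
    mulVecE A v ≠ 0 :=
  (map_ne_zero_iff _ (injective_matLin hA)).2 hv

lemma matAct_mk {A : Matrix (Fin 2) (Fin 2) ℝ} (hA : IsUnit A.det) {v : E2} (hv : v ≠ 0) :
    matAct A (Projectivization.mk ℝ v hv) =
      Projectivization.mk ℝ (mulVecE A v) (mulVecE_ne_zero hA hv) := by
  rw [matAct, dif_pos (injective_matLin hA)]
  rfl

lemma matAct_one (x : RP1) : matAct 1 x = x := by
  induction x using Projectivization.ind with
  | h v hv => simp_rw [matAct_mk (A := 1) (by simp) hv, mulVecE_one]

lemma matAct_mul {A B : Matrix (Fin 2) (Fin 2) ℝ} (hA : IsUnit A.det) (hB : IsUnit B.det)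
    (x : RP1) : matAct (A * B) x = matAct A (matAct B x) := by
  induction x using Projectivization.ind with
  | h v hv =>
    have hAB : IsUnit (A * B).det := by rw [Matrix.det_mul]; exact hA.mul hB
    rw [matAct_mk hAB, matAct_mk hB, matAct_mk hA]
    simp_rw [mulVecE_mul]

lemma norm_mulVecE_le (A : Matrix (Fin 2) (Fin 2) ℝ) (v : E2) :
    ‖mulVecE A v‖ ≤ matOpNorm A * ‖v‖ :=
  (LinearMap.toContinuousLinearMap (matLin A)).le_opNorm v

lemma matOpNorm_le_of_forall {A : Matrix (Fin 2) (Fin 2) ℝ} {c : ℝ} (hc : 0 ≤ c)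
    (h : ∀ v : E2, ‖mulVecE A v‖ ≤ c * ‖v‖) : matOpNorm A ≤ c :=
  ContinuousLinearMap.opNorm_le_bound _ hc h

lemma matOpNorm_mul_le (A B : Matrix (Fin 2) (Fin 2) ℝ) :
    matOpNorm (A * B) ≤ matOpNorm A * matOpNorm B :=
  matOpNorm_le_of_forall (mul_nonneg (norm_nonneg _) (norm_nonneg _)) fun v =>
    calc ‖mulVecE (A * B) v‖ = ‖mulVecE A (mulVecE B v)‖ := by rw [mulVecE_mul]
      _ ≤ matOpNorm A * (matOpNorm B * ‖v‖) :=
        (norm_mulVecE_le A _).trans (by gcongr; exacts [norm_nonneg _, norm_mulVecE_le B v])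
      _ = matOpNorm A * matOpNorm B * ‖v‖ := (mul_assoc ..).symm

lemma matOpNorm_one_le : matOpNorm 1 ≤ 1 :=
  matOpNorm_le_of_forall zero_le_one fun v => by rw [mulVecE_one, one_mul]

lemma spansLine_rep (x : RP1) : SpansLine x.rep x := ⟨x.rep_nonzero, x.mk_rep⟩

lemma SpansLine.ne_zero {w : E2} {x : RP1} (h : SpansLine w x) : w ≠ 0 := h.1

lemma SpansLine.exists_eq_smul_rep {w : E2} {x : RP1} (h : SpansLine w x) :
    ∃ c : ℝ, c ≠ 0 ∧ w = c • x.rep := by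
  obtain ⟨hw, rfl⟩ := h
  obtain ⟨c, hc⟩ := (Projectivization.mk_eq_mk_iff' ℝ _ _ hw (Projectivization.rep_nonzero _)).1
    (Projectivization.mk_rep _).symm
  exact ⟨c, by rintro rfl; exact hw (by rw [← hc, zero_smul]), hc.symm⟩

lemma SpansLine.mulVecE {A : Matrix (Fin 2) (Fin 2) ℝ} (hA : IsUnit A.det) {w : E2} {x : RP1}
    (h : SpansLine w x) : SpansLine (mulVecE A w) (matAct A x) := by
  obtain ⟨hw, rfl⟩ := h
  exact ⟨mulVecE_ne_zero hA hw, (matAct_mk hA hw).symm⟩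

lemma SpansLine.smul {w : E2} {x : RP1} (h : SpansLine w x) {c : ℝ} (hc : c ≠ 0) :
    SpansLine (c • w) x := by
  obtain ⟨hw, rfl⟩ := h
  exact ⟨smul_ne_zero hc hw, (Projectivization.mk_eq_mk_iff' ℝ _ _ _ hw).2 ⟨c, rfl⟩⟩

lemma exists_norm_eq_one_spansLine (x : RP1) : ∃ w : E2, ‖w‖ = 1 ∧ SpansLine w x :=
  ⟨NormedSpace.normalize x.rep, NormedSpace.norm_normalize x.rep_nonzero,
    (spansLine_rep x).smul (inv_ne_zero (norm_ne_zero_iff.2 x.rep_nonzero))⟩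

def lineStretch (A : Matrix (Fin 2) (Fin 2) ℝ) (x : RP1) : ℝ := ‖mulVecE A x.rep‖ / ‖x.rep‖

lemma lineStretch_eq {A : Matrix (Fin 2) (Fin 2) ℝ} {w : E2} {x : RP1} (h : SpansLine w x) :
    lineStretch A x = ‖mulVecE A w‖ / ‖w‖ := by
  obtain ⟨c, hc, rfl⟩ := h.exists_eq_smul_rep
  rw [lineStretch, mulVecE_smul, norm_smul, norm_smul, mul_div_mul_left _ _ (norm_ne_zero_iff.2 hc)]

lemma norm_mulVecE_eq_lineStretch (A : Matrix (Fin 2) (Fin 2) ℝ) {w : E2} {x : RP1}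
    (h : SpansLine w x) (hw : ‖w‖ = 1) : ‖mulVecE A w‖ = lineStretch A x := by
  rw [lineStretch_eq h, hw, div_one]

lemma lineStretch_one (x : RP1) : lineStretch 1 x = 1 := by
  rw [lineStretch, mulVecE_one, div_self (norm_ne_zero_iff.2 x.rep_nonzero)]

lemma lineStretch_nonneg (A : Matrix (Fin 2) (Fin 2) ℝ) (x : RP1) : 0 ≤ lineStretch A x :=
  div_nonneg (norm_nonneg _) (norm_nonneg _)

lemma lineStretch_pos {A : Matrix (Fin 2) (Fin 2) ℝ} (hA : IsUnit A.det) (x : RP1) :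
    0 < lineStretch A x :=
  div_pos (norm_pos_iff.2 (mulVecE_ne_zero hA x.rep_nonzero)) (norm_pos_iff.2 x.rep_nonzero)

lemma lineStretch_le_matOpNorm (A : Matrix (Fin 2) (Fin 2) ℝ) (x : RP1) :
    lineStretch A x ≤ matOpNorm A :=
  div_le_of_le_mul₀ (norm_nonneg _) (norm_nonneg _) (norm_mulVecE_le A _)

lemma lineStretch_mul {A B : Matrix (Fin 2) (Fin 2) ℝ} (hB : IsUnit B.det) (x : RP1) :
    lineStretch (A * B) x = lineStretch A (matAct B x) * lineStretch B x := by
  have hBx : mulVecE B x.rep ≠ 0 := mulVecE_ne_zero hB x.rep_nonzero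
  rw [lineStretch_eq ((spansLine_rep x).mulVecE hB), lineStretch, lineStretch, mulVecE_mul,
    div_mul_div_cancel₀ (norm_ne_zero_iff.2 hBx)]

lemma lineStretch_inv {A : Matrix (Fin 2) (Fin 2) ℝ} (hA : IsUnit A.det) (x : RP1) :
    lineStretch A⁻¹ (matAct A x) = (lineStretch A x)⁻¹ := by
  rw [lineStretch_eq ((spansLine_rep x).mulVecE hA), mulVecE_inv_mulVecE hA, lineStretch, inv_div]

def cross (v w : E2) : ℝ := v 0 * w 1 - v 1 * w 0

lemma cross_sq_add_inner_sq (v w : E2) :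
    cross v w ^ 2 + (inner ℝ v w : ℝ) ^ 2 = ‖v‖ ^ 2 * ‖w‖ ^ 2 := by
  simp only [EuclideanSpace.norm_sq_eq, PiLp.inner_apply, Fin.sum_univ_two, Real.norm_eq_abs,
    sq_abs, cross, RCLike.inner_apply, conj_trivial]
  ring

lemma cross_mulVecE (A : Matrix (Fin 2) (Fin 2) ℝ) (v w : E2) :
    cross (mulVecE A v) (mulVecE A w) = A.det * cross v w := by
  simp only [cross, mulVecE_apply, Matrix.det_fin_two]
  ring

lemma projDist_eq {x y : RP1} {v w : E2} (hv : SpansLine v x) (hw : SpansLine w y) :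
    projDist x y = Real.sqrt (1 - ((inner ℝ v w : ℝ) / (‖v‖ * ‖w‖)) ^ 2) := by
  obtain ⟨a, ha, rfl⟩ := hv.exists_eq_smul_rep
  obtain ⟨b, hb, rfl⟩ := hw.exists_eq_smul_rep
  have key : ((inner ℝ (a • x.rep) (b • y.rep) : ℝ) / (‖a • x.rep‖ * ‖b • y.rep‖)) ^ 2 =
      ((inner ℝ x.rep y.rep : ℝ) / (‖x.rep‖ * ‖y.rep‖)) ^ 2 := by
    simp only [real_inner_smul_left, real_inner_smul_right, norm_smul, Real.norm_eq_abs, div_pow,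
      mul_pow, sq_abs]
    field_simp
  rw [projDist, key]

lemma projDist_eq_abs_cross_div {x y : RP1} {v w : E2} (hv : SpansLine v x) (hw : SpansLine w y) :
    projDist x y = |cross v w| / (‖v‖ * ‖w‖) := by
  have hvw : (‖v‖ * ‖w‖) ^ 2 ≠ 0 :=
    pow_ne_zero _ (mul_ne_zero (norm_ne_zero_iff.2 hv.ne_zero) (norm_ne_zero_iff.2 hw.ne_zero))
  have h : 1 - ((inner ℝ v w : ℝ) / (‖v‖ * ‖w‖)) ^ 2 = (cross v w / (‖v‖ * ‖w‖)) ^ 2 := by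
    rw [div_pow, div_pow, sub_eq_iff_eq_add, ← add_div, eq_div_iff hvw, one_mul, mul_pow]
    linarith [cross_sq_add_inner_sq v w]
  rw [projDist_eq hv hw, h, Real.sqrt_sq_eq_abs, abs_div,
    abs_of_nonneg (mul_nonneg (norm_nonneg v) (norm_nonneg w))]

lemma projDist_nonneg (x y : RP1) : 0 ≤ projDist x y := Real.sqrt_nonneg _

lemma projDist_le_one (x y : RP1) : projDist x y ≤ 1 :=
  Real.sqrt_le_one.2 (sub_le_self _ (sq_nonneg _))

lemma projDist_eq_norm_sub {x y : RP1} {v w : E2} (hv : SpansLine v x) (hw : SpansLine w y)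
    (hv1 : ‖v‖ = 1) (hw1 : ‖w‖ = 1) : projDist x y = ‖v - (inner ℝ v w : ℝ) • w‖ := by
  have h : ‖v - (inner ℝ v w : ℝ) • w‖ ^ 2 = 1 - (inner ℝ v w : ℝ) ^ 2 := by
    rw [norm_sub_sq_real, real_inner_smul_right, norm_smul, Real.norm_eq_abs, mul_pow, sq_abs, hv1,
      hw1]
    ring
  rw [projDist_eq hv hw, hv1, hw1, mul_one, div_one, ← h, Real.sqrt_sq (norm_nonneg _)]

lemma projDist_matAct_mul_lineStretch {A : Matrix (Fin 2) (Fin 2) ℝ} (hA : IsUnit A.det)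
    (x y : RP1) :
    projDist (matAct A x) (matAct A y) * (lineStretch A x * lineStretch A y) =
      |A.det| * projDist x y := by
  have hx := (spansLine_rep x).mulVecE hA
  have hy := (spansLine_rep y).mulVecE hA
  have hAx := norm_ne_zero_iff.2 hx.ne_zero
  have hAy := norm_ne_zero_iff.2 hy.ne_zero
  have hx0 := norm_ne_zero_iff.2 x.rep_nonzero
  have hy0 := norm_ne_zero_iff.2 y.rep_nonzero
  rw [projDist_eq_abs_cross_div hx hy,
    projDist_eq_abs_cross_div (spansLine_rep x) (spansLine_rep y), cross_mulVecE, abs_mul,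
    lineStretch, lineStretch]
  field_simp

lemma abs_cross_le (v w : E2) : |cross v w| ≤ ‖v‖ * ‖w‖ :=
  abs_le_of_sq_le_sq (by nlinarith [cross_sq_add_inner_sq v w, sq_nonneg (inner ℝ v w : ℝ)])
    (by positivity)

def rot (v : E2) : E2 := !₂[-(v 1), v 0]

lemma norm_rot (v : E2) : ‖rot v‖ = ‖v‖ := by
  simp [rot, EuclideanSpace.norm_eq, Fin.sum_univ_two, add_comm]

lemma cross_rot (v : E2) : cross v (rot v) = ‖v‖ ^ 2 := by
  simp only [cross, rot, PiLp.toLp_apply, cons_val_one, cons_val_fin_one, cons_val_zero,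
    EuclideanSpace.norm_sq_eq, Real.norm_eq_abs, sq_abs, Fin.sum_univ_two]
  ring

lemma abs_det_le_matOpNorm_mul_lineStretch (A : Matrix (Fin 2) (Fin 2) ℝ) (x : RP1) :
    |A.det| ≤ matOpNorm A * lineStretch A x := by
  set v := x.rep
  have hv : 0 < ‖v‖ := norm_pos_iff.2 x.rep_nonzero
  have h : |A.det| * ‖v‖ ^ 2 ≤ ‖mulVecE A v‖ * (matOpNorm A * ‖v‖) :=
    calc |A.det| * ‖v‖ ^ 2 = |cross (mulVecE A v) (mulVecE A (rot v))| := by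
          rw [cross_mulVecE, cross_rot, abs_mul, abs_of_nonneg (sq_nonneg ‖v‖)]
      _ ≤ ‖mulVecE A v‖ * ‖mulVecE A (rot v)‖ := abs_cross_le _ _
      _ ≤ ‖mulVecE A v‖ * (matOpNorm A * ‖v‖) := by
          gcongr; simpa only [norm_rot] using norm_mulVecE_le A (rot v)
  rw [lineStretch, mul_div_assoc', le_div_iff₀ hv]
  nlinarith

section Cocycle

variable {P : ℤ → Matrix (Fin 2) (Fin 2) ℝ}

lemma fwd_add (m n : ℕ) (i : ℤ) : fwd P (m + n) i = fwd P m (i + n) * fwd P n i := by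
  induction m with
  | zero => simp [fwd]
  | succ m ih =>
    rw [Nat.add_right_comm, fwd, ih, fwd, mul_assoc]
    push_cast
    ring_nf

lemma bwd_eq_inv_fwd (n : ℕ) (i : ℤ) : bwd P n i = (fwd P n (i - n))⁻¹ := by
  induction n generalizing i with
  | zero => simp [bwd, fwd]
  | succ n ih =>
    rw [bwd, ih, fwd, Matrix.mul_inv_rev]
    push_cast
    ring_nf

lemma det_fwd (hP : ∀ i, (P i).det = 1) (n : ℕ) (i : ℤ) : (fwd P n i).det = 1 := by
  induction n with
  | zero => simp [fwd]
  | succ n ih => rw [fwd, Matrix.det_mul, hP, ih, one_mul]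

lemma isUnit_det_of_det_eq_one (hP : ∀ i, (P i).det = 1) (i : ℤ) : IsUnit (P i).det :=
  (hP i).symm ▸ isUnit_one

lemma isUnit_det_fwd (hP : ∀ i, IsUnit (P i).det) (n : ℕ) (i : ℤ) : IsUnit (fwd P n i).det := by
  induction n with
  | zero => simp [fwd]
  | succ n ih => rw [fwd, Matrix.det_mul]; exact (hP _).mul ih

lemma matOpNorm_fwd_le {M : ℝ} (hM0 : 0 ≤ M) (hM : ∀ i, matOpNorm (P i) ≤ M) (n : ℕ) (i : ℤ) :
    matOpNorm (fwd P n i) ≤ M ^ n := by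
  induction n with
  | zero => exact matOpNorm_one_le
  | succ n ih =>
    calc matOpNorm (fwd P (n + 1) i) ≤ matOpNorm (P (i + n)) * matOpNorm (fwd P n i) :=
          matOpNorm_mul_le _ _
      _ ≤ M * M ^ n := mul_le_mul (hM _) ih (norm_nonneg _) hM0
      _ = M ^ (n + 1) := (pow_succ' M n).symm

variable (hP : ∀ i, IsUnit (P i).det) {x : ℤ → RP1} (hx : ∀ i, matAct (P i) (x i) = x (i + 1))
include hP hx

lemma matAct_fwd (n : ℕ) (i : ℤ) : matAct (fwd P n i) (x i) = x (i + n) := by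
  induction n with
  | zero => simpa [fwd] using matAct_one (x i)
  | succ n ih =>
    rw [fwd, matAct_mul (hP _) (isUnit_det_fwd hP n i), ih, hx]
    push_cast
    ring_nf

lemma lineStretch_fwd_add (m n : ℕ) (i : ℤ) :
    lineStretch (fwd P (m + n) i) (x i) =
      lineStretch (fwd P m (i + n)) (x (i + n)) * lineStretch (fwd P n i) (x i) := by
  rw [fwd_add, lineStretch_mul (isUnit_det_fwd hP n i), matAct_fwd hP hx]

lemma norm_mulVecE_bwd {n : ℕ} {i : ℤ} {w : E2} (hw : SpansLine w (x i)) (hw1 : ‖w‖ = 1) :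
    ‖mulVecE (bwd P n i) w‖ = (lineStretch (fwd P n (i - n)) (x (i - n)))⁻¹ := by
  have hxi : x i = matAct (fwd P n (i - n)) (x (i - n)) := by
    rw [matAct_fwd hP hx, sub_add_cancel]
  rw [bwd_eq_inv_fwd, norm_mulVecE_eq_lineStretch _ (hxi ▸ hw) hw1,
    lineStretch_inv (isUnit_det_fwd hP n _)]

end Cocycle

lemma lineStretch_sub_le_matOpNorm_mul_projDist (A : Matrix (Fin 2) (Fin 2) ℝ) (x y : RP1) :
    lineStretch A x - lineStretch A y ≤ matOpNorm A * projDist x y := by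
  obtain ⟨v, hv1, hv⟩ := exists_norm_eq_one_spansLine x
  obtain ⟨w, hw1, hw⟩ := exists_norm_eq_one_spansLine y
  set a : ℝ := inner ℝ v w
  have ha : |a| ≤ 1 := by simpa [hv1, hw1] using abs_real_inner_le_norm v w
  rw [← norm_mulVecE_eq_lineStretch A hv hv1, ← norm_mulVecE_eq_lineStretch A hw hw1,
    projDist_eq_norm_sub hv hw hv1 hw1]
  calc ‖mulVecE A v‖ - ‖mulVecE A w‖
      ≤ ‖mulVecE A (v - a • w)‖ + |a| * ‖mulVecE A w‖ - ‖mulVecE A w‖ := by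
        gcongr
        simpa [mulVecE_sub, mulVecE_smul, norm_smul] using
          norm_add_le (mulVecE A (v - a • w)) (a • mulVecE A w)
    _ ≤ ‖mulVecE A (v - a • w)‖ := by nlinarith [norm_nonneg (mulVecE A w)]
    _ ≤ matOpNorm A * ‖v - a • w‖ := norm_mulVecE_le A _

section Hyperbolic

variable {P : ℤ → Matrix (Fin 2) (Fin 2) ℝ} (hP : ∀ i, IsUnit (P i).det)
include hP

lemma pow_div_le_lineStretch_fwd {u : ℤ → RP1} (hu : ∀ i, matAct (P i) (u i) = u (i + 1))
    {C η : ℝ} (hC : 0 < C) (hη : 0 < η)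
    (hb : ∀ i n w, ‖w‖ = 1 → SpansLine w (u i) → ‖mulVecE (bwd P n i) w‖ ≤ C / η ^ n)
    (n : ℕ) (i : ℤ) : η ^ n / C ≤ lineStretch (fwd P n i) (u i) := by
  obtain ⟨w, hw1, hw⟩ := exists_norm_eq_one_spansLine (u (i + n))
  have h := hb _ n w hw1 hw
  rw [norm_mulVecE_bwd hP hu hw hw1, add_sub_cancel_right,
    inv_le_comm₀ (lineStretch_pos (isUnit_det_fwd hP n i) _) (by positivity), inv_div] at h
  exact h

theorem isDS_of_isUH {M : ℝ} (hM0 : 0 < M) (hM : ∀ i, matOpNorm (P i) ≤ M) (h : IsUH P) :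
    IsDS P := by
  obtain ⟨u, s, hinv, C, hC, η, hη, hb⟩ := h
  obtain ⟨N, hN⟩ := pow_unbounded_of_one_lt (2 * C ^ 2 + 1) hη
  have hN1 : 1 ≤ N := Nat.pos_of_ne_zero fun h0 => by
    rw [h0, pow_zero] at hN; nlinarith [sq_nonneg C]
  set q := η ^ N
  have hq : 0 < q := by positivity
  have hsep : 2 * (C / q) < q / C := by
    rw [mul_div_assoc', div_lt_div_iff₀ hq hC]; nlinarith
  have hgap : 0 < q / C - C / q := by linarith [div_pos hC hq]
  have hgrow : ∀ i, q / C ≤ lineStretch (fwd P N i) (u i) :=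
    pow_div_le_lineStretch_fwd hP (fun i => (hinv i).1) hC (by positivity)
      (fun i n => (hb i n).1) N
  have hdecay : ∀ i, lineStretch (fwd P N i) (s i) ≤ C / q := fun i => by
    obtain ⟨w, hw1, hw⟩ := exists_norm_eq_one_spansLine (s i)
    exact norm_mulVecE_eq_lineStretch _ hw hw1 ▸ (hb i N).2 w hw1 hw
  refine ⟨u, s, hinv, N, hN1, ⟨2, one_lt_two, fun i w w' hw1 hw'1 hw hw' => ?_⟩,
    ⟨(q / C - C / q) / M ^ N / 2, by positivity, fun i => ?_⟩,
    ⟨q / C, by positivity, fun i => (hgrow i).trans (lineStretch_le_matOpNorm _ _)⟩⟩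
  · rw [norm_mulVecE_eq_lineStretch _ hw hw1, norm_mulVecE_eq_lineStretch _ hw' hw'1]
    linarith [hgrow i, hdecay i]
  · have hangle : q / C - C / q ≤ M ^ N * projDist (u i) (s i) :=
      calc q / C - C / q ≤ lineStretch (fwd P N i) (u i) - lineStretch (fwd P N i) (s i) := by
            linarith [hgrow i, hdecay i]
        _ ≤ matOpNorm (fwd P N i) * projDist (u i) (s i) :=
            lineStretch_sub_le_matOpNorm_mul_projDist _ _ _
        _ ≤ M ^ N * projDist (u i) (s i) :=
            mul_le_mul_of_nonneg_right (matOpNorm_fwd_le hM0.le hM N i) (projDist_nonneg _ _)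
    rw [gt_iff_lt, div_div, div_lt_iff₀ (by positivity)]
    nlinarith [pow_pos hM0 N]

end Hyperbolic

lemma le_mul_div_rpow_of_forall_le_div_pow {g : ℕ → ℝ} {N : ℕ} (hN : 0 < N) {K θ : ℝ}
    (hK : 0 ≤ K) (hθ : 1 < θ) (h : ∀ k r, r < N → g (r + k * N) ≤ K / θ ^ k) (n : ℕ) :
    g n ≤ K * θ / (θ ^ (N : ℝ)⁻¹) ^ n := by
  set ρ := θ ^ (N : ℝ)⁻¹
  have hρ : 1 ≤ ρ := Real.one_le_rpow hθ.le (by positivity)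
  have hρn : ρ ^ n ≤ θ ^ (n / N + 1) :=
    calc ρ ^ n ≤ ρ ^ ((n / N + 1) * N) := by
          refine pow_le_pow_right₀ hρ ?_
          rw [add_one_mul]
          exact (Nat.lt_div_mul_add hN).le
      _ = θ ^ (n / N + 1) := by
          rw [mul_comm, pow_mul, Real.rpow_inv_natCast_pow (by positivity) hN.ne']
  calc g n = g (n % N + n / N * N) := by rw [Nat.mod_add_div']
    _ ≤ K / θ ^ (n / N) := h _ _ (Nat.mod_lt _ hN)
    _ = K * θ / θ ^ (n / N + 1) := by
        rw [pow_succ, mul_div_mul_right _ _ (by positivity)]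
    _ ≤ K * θ / ρ ^ n := div_le_div_of_nonneg_left (by positivity) (by positivity) hρn

lemma sq_sqrt_pow_mul_sqrt {a b : ℝ} (ha : 0 ≤ a) (hb : 0 ≤ b) (k : ℕ) :
    (√a ^ k * √b) ^ 2 = a ^ k * b := by
  rw [mul_pow, ← pow_mul, mul_comm k, pow_mul, Real.sq_sqrt ha, Real.sq_sqrt hb]

section Dominated

variable {P : ℤ → Matrix (Fin 2) (Fin 2) ℝ} (hdet : ∀ i, (P i).det = 1)
  {u s : ℤ → RP1} (hu : ∀ i, matAct (P i) (u i) = u (i + 1))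
  (hs : ∀ i, matAct (P i) (s i) = s (i + 1))
include hdet hu hs

lemma projDist_mul_lineStretch_fwd (n : ℕ) (i : ℤ) :
    projDist (u (i + n)) (s (i + n)) *
        (lineStretch (fwd P n i) (u i) * lineStretch (fwd P n i) (s i)) =
      projDist (u i) (s i) := by
  have hP := isUnit_det_of_det_eq_one hdet
  rw [← matAct_fwd hP hu, ← matAct_fwd hP hs,
    projDist_matAct_mul_lineStretch (isUnit_det_fwd hP n i), det_fwd hdet, abs_one, one_mul]

variable {N : ℕ} {η : ℝ}
  (hdom : ∀ j, η * lineStretch (fwd P N j) (s j) < lineStretch (fwd P N j) (u j))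
include hdom

lemma mul_lineStretch_sq_mul_projDist_le (j : ℤ) :
    η * lineStretch (fwd P N j) (s j) ^ 2 * projDist (u (j + N)) (s (j + N)) ≤
      projDist (u j) (s j) := by
  rw [← projDist_mul_lineStretch_fwd hdet hu hs N j]
  have hσ := lineStretch_pos (isUnit_det_fwd (isUnit_det_of_det_eq_one hdet) N j) (s j)
  nlinarith [mul_nonneg (mul_nonneg (projDist_nonneg (u (j + N)) (s (j + N))) hσ.le)
    (sub_nonneg.2 (hdom j).le)]

lemma mul_projDist_le (j : ℤ) :
    η * projDist (u j) (s j) ≤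
      lineStretch (fwd P N j) (u j) ^ 2 * projDist (u (j + N)) (s (j + N)) := by
  rw [← projDist_mul_lineStretch_fwd hdet hu hs N j]
  have hβ := lineStretch_pos (isUnit_det_fwd (isUnit_det_of_det_eq_one hdet) N j) (u j)
  nlinarith [mul_nonneg (mul_nonneg (projDist_nonneg (u (j + N)) (s (j + N))) hβ.le)
    (sub_nonneg.2 (hdom j).le)]

lemma pow_mul_lineStretch_sq_mul_projDist_le (hη : 0 ≤ η) (k : ℕ) (i : ℤ) :
    η ^ k * lineStretch (fwd P (k * N) i) (s i) ^ 2 *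
        projDist (u (i + ↑(k * N))) (s (i + ↑(k * N))) ≤ projDist (u i) (s i) := by
  induction k with
  | zero => simp [fwd, lineStretch_one]
  | succ k ih =>
    have e : i + ↑(N + k * N) = i + ↑(k * N) + N := by push_cast; ring
    rw [show (k + 1) * N = N + k * N by ring,
      lineStretch_fwd_add (isUnit_det_of_det_eq_one hdet) hs, e]
    calc _ = η ^ k * lineStretch (fwd P (k * N) i) (s i) ^ 2 *
          (η * lineStretch (fwd P N _) (s _) ^ 2 * projDist (u (i + ↑(k * N) + N)) (s _)) := by
          ring
      _ ≤ η ^ k * lineStretch (fwd P (k * N) i) (s i) ^ 2 *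
          projDist (u (i + ↑(k * N))) (s (i + ↑(k * N))) := by
          gcongr; exact mul_lineStretch_sq_mul_projDist_le hdet hu hs hdom _
      _ ≤ _ := ih

lemma pow_mul_projDist_le (hη : 0 ≤ η) (k : ℕ) (i : ℤ) :
    η ^ k * projDist (u i) (s i) ≤
      lineStretch (fwd P (k * N) i) (u i) ^ 2 * projDist (u (i + ↑(k * N))) (s (i + ↑(k * N))) := by
  induction k with
  | zero => simp [fwd, lineStretch_one]
  | succ k ih =>
    have e : i + ↑(N + k * N) = i + ↑(k * N) + N := by push_cast; ring
    rw [show (k + 1) * N = N + k * N by ring,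
      lineStretch_fwd_add (isUnit_det_of_det_eq_one hdet) hu, e]
    calc η ^ (k + 1) * projDist (u i) (s i) = η * (η ^ k * projDist (u i) (s i)) := by ring
      _ ≤ η * (lineStretch (fwd P (k * N) i) (u i) ^ 2 *
          projDist (u (i + ↑(k * N))) (s (i + ↑(k * N)))) := by gcongr
      _ = lineStretch (fwd P (k * N) i) (u i) ^ 2 *
          (η * projDist (u (i + ↑(k * N))) (s (i + ↑(k * N)))) := by ring
      _ ≤ lineStretch (fwd P (k * N) i) (u i) ^ 2 *
          (lineStretch (fwd P N (i + ↑(k * N))) (u (i + ↑(k * N))) ^ 2 *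
            projDist (u (i + ↑(k * N) + N)) (s (i + ↑(k * N) + N))) :=
          mul_le_mul_of_nonneg_left (mul_projDist_le hdet hu hs hdom _) (sq_nonneg _)
      _ = _ := by ring

variable {δ : ℝ} (hδ : ∀ i, δ ≤ projDist (u i) (s i))
include hδ

lemma pow_mul_mul_lineStretch_sq_le_one (hη : 0 ≤ η) (k : ℕ) (i : ℤ) :
    η ^ k * δ * lineStretch (fwd P (k * N) i) (s i) ^ 2 ≤ 1 :=
  calc η ^ k * δ * lineStretch (fwd P (k * N) i) (s i) ^ 2
      ≤ η ^ k * lineStretch (fwd P (k * N) i) (s i) ^ 2 *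
          projDist (u (i + ↑(k * N))) (s (i + ↑(k * N))) := by
        rw [mul_right_comm]; gcongr; exact hδ _
    _ ≤ projDist (u i) (s i) := pow_mul_lineStretch_sq_mul_projDist_le hdet hu hs hdom hη k i
    _ ≤ 1 := projDist_le_one _ _

lemma pow_mul_le_lineStretch_sq (hη : 0 ≤ η) (k : ℕ) (i : ℤ) :
    η ^ k * δ ≤ lineStretch (fwd P (k * N) i) (u i) ^ 2 :=
  calc η ^ k * δ ≤ η ^ k * projDist (u i) (s i) := by gcongr; exact hδ i
    _ ≤ lineStretch (fwd P (k * N) i) (u i) ^ 2 *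
          projDist (u (i + ↑(k * N))) (s (i + ↑(k * N))) :=
        pow_mul_projDist_le hdet hu hs hdom hη k i
    _ ≤ lineStretch (fwd P (k * N) i) (u i) ^ 2 :=
        mul_le_of_le_one_right (sq_nonneg _) (projDist_le_one _ _)

variable {M : ℝ} (hM1 : 1 ≤ M) (hM : ∀ i, matOpNorm (P i) ≤ M)
include hM1 hM

lemma lineStretch_fwd_le (hη : 0 < η) (hδ0 : 0 < δ) {r : ℕ} (hr : r < N) (k : ℕ) (i : ℤ) :
    lineStretch (fwd P (r + k * N) i) (s i) ≤ M ^ N / √δ / √η ^ k := by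
  have hηδ : 0 < √η ^ k * √δ := by positivity
  have hσ : √η ^ k * √δ * lineStretch (fwd P (k * N) i) (s i) ≤ 1 := by
    refine (sq_le_one_iff₀ (mul_nonneg hηδ.le (lineStretch_nonneg _ _))).1 ?_
    rw [mul_pow, sq_sqrt_pow_mul_sqrt hη.le hδ0.le]
    exact pow_mul_mul_lineStretch_sq_le_one hdet hu hs hdom hδ hη.le k i
  rw [lineStretch_fwd_add (isUnit_det_of_det_eq_one hdet) hs, div_div, mul_comm √δ,
    le_div_iff₀ hηδ]
  calc lineStretch (fwd P r _) (s _) * lineStretch (fwd P (k * N) i) (s i) * (√η ^ k * √δ)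
      = lineStretch (fwd P r _) (s _) * (√η ^ k * √δ * lineStretch (fwd P (k * N) i) (s i)) := by
        ring
    _ ≤ M ^ N * 1 :=
        mul_le_mul ((lineStretch_le_matOpNorm _ _).trans
            ((matOpNorm_fwd_le (by positivity) hM r _).trans (pow_le_pow_right₀ hM1 hr.le))) hσ
          (mul_nonneg hηδ.le (lineStretch_nonneg _ _)) (by positivity)
    _ = M ^ N := mul_one _

lemma inv_lineStretch_fwd_le (hη : 0 < η) (hδ0 : 0 < δ) {r : ℕ} (hr : r < N) (k : ℕ) (j : ℤ) :
    (lineStretch (fwd P (r + k * N) j) (u j))⁻¹ ≤ M ^ N / √δ / √η ^ k := by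
  have hP := isUnit_det_of_det_eq_one hdet
  have hηδ : 0 < √η ^ k * √δ := by positivity
  have hβ : √η ^ k * √δ ≤ lineStretch (fwd P (k * N) j) (u j) := by
    refine (pow_le_pow_iff_left₀ hηδ.le (lineStretch_nonneg _ _) two_ne_zero).1 ?_
    rw [sq_sqrt_pow_mul_sqrt hη.le hδ0.le]
    exact pow_mul_le_lineStretch_sq hdet hu hs hdom hδ hη.le k j
  have hβr : 1 ≤ M ^ N * lineStretch (fwd P r (j + ↑(k * N))) (u (j + ↑(k * N))) := by
    have := abs_det_le_matOpNorm_mul_lineStretch (fwd P r (j + ↑(k * N))) (u (j + ↑(k * N)))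
    rw [det_fwd hdet, abs_one] at this
    exact this.trans (mul_le_mul_of_nonneg_right ((matOpNorm_fwd_le (by positivity) hM r _).trans
      (pow_le_pow_right₀ hM1 hr.le)) (lineStretch_nonneg _ _))
  rw [lineStretch_fwd_add hP hu, mul_inv, div_div, mul_comm √δ, div_eq_mul_inv]
  exact mul_le_mul ((inv_le_iff_one_le_mul₀ (lineStretch_pos (isUnit_det_fwd hP _ _) _)).2
      (by linarith)) (inv_anti₀ hηδ hβ) (inv_nonneg.2 (lineStretch_nonneg _ _)) (by positivity)

end Dominated

theorem isUH_of_isDS {P : ℤ → Matrix (Fin 2) (Fin 2) ℝ} (hdet : ∀ i, (P i).det = 1) {M : ℝ}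
    (hM1 : 1 ≤ M) (hM : ∀ i, matOpNorm (P i) ≤ M) (h : IsDS P) : IsUH P := by
  obtain ⟨u, s, hinv, N, hN1, ⟨η, hη, hDS2⟩, ⟨δ, hδ, hDS3⟩, -⟩ := h
  have hu i := (hinv i).1
  have hs i := (hinv i).2
  have hdom : ∀ j, η * lineStretch (fwd P N j) (s j) < lineStretch (fwd P N j) (u j) := fun j => by
    obtain ⟨w, hw1, hw⟩ := exists_norm_eq_one_spansLine (u j)
    obtain ⟨w', hw'1, hw'⟩ := exists_norm_eq_one_spansLine (s j)
    simpa only [norm_mulVecE_eq_lineStretch _ hw hw1, norm_mulVecE_eq_lineStretch _ hw' hw'1]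
      using hDS2 j w w' hw1 hw'1 hw hw'
  have hd i := (hDS3 i).le
  have hθ : 1 < √η := Real.lt_sqrt zero_le_one |>.2 (by simpa using hη)
  refine ⟨u, s, hinv, M ^ N / √δ * √η, by positivity, √η ^ (N : ℝ)⁻¹,
    Real.one_lt_rpow hθ (by positivity), fun i n => ⟨fun w hw1 hw => ?_, fun w hw1 hw => ?_⟩⟩
  · rw [norm_mulVecE_bwd (isUnit_det_of_det_eq_one hdet) hu hw hw1]
    exact le_mul_div_rpow_of_forall_le_div_pow
      (g := fun n => (lineStretch (fwd P n (i - n)) (u (i - n)))⁻¹) hN1 (by positivity) hθ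
      (fun k r hr => inv_lineStretch_fwd_le hdet hu hs hdom hd hM1 hM (by positivity) hδ hr k _) n
  · rw [norm_mulVecE_eq_lineStretch _ hw hw1]
    exact le_mul_div_rpow_of_forall_le_div_pow (g := fun n => lineStretch (fwd P n i) (s i))
      hN1 (by positivity) hθ
      (fun k r hr => lineStretch_fwd_le hdet hu hs hdom hd hM1 hM (by positivity) hδ hr k i) n

theorem stmt_3 (P : ℤ → Matrix.SpecialLinearGroup (Fin 2) ℝ)
    (hbdd : ∃ C : ℝ, ∀ i : ℤ, matOpNorm (P i : Matrix (Fin 2) (Fin 2) ℝ) ≤ C) :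
    IsUH (fun i => (P i : Matrix (Fin 2) (Fin 2) ℝ)) ↔
      IsDS (fun i => (P i : Matrix (Fin 2) (Fin 2) ℝ)) := by
  obtain ⟨C, hC⟩ := hbdd
  have hdet : ∀ i, (P i : Matrix (Fin 2) (Fin 2) ℝ).det = 1 := fun i => (P i).2
  have hM : ∀ i, matOpNorm (P i : Matrix (Fin 2) (Fin 2) ℝ) ≤ max C 1 :=
    fun i => (hC i).trans (le_max_left C 1)
  exact ⟨isDS_of_isUH (isUnit_det_of_det_eq_one hdet) (by positivity) hM,
    isUH_of_isDS hdet (le_max_right C 1) hM⟩
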